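/- arXiv:2406.07569 — 8 statements merged into one kernel-verified Lean document; each statement's English description precedes it below -/
import Mathlib

section
/- Let 𝔞 be a nonzero two-sided ideal of the algebra N := N_Δ(E) that is Δ-stable (δ(𝔞) ⊆ 𝔞 for all δ ∈ Δ), and let 𝔞₀ := 𝔞 ∩ N_Δ(E)_0 = 𝔞 ∩ E^Δ. Then 𝔞₀ is a nonzero two-sided ideal of the ring N_Δ(E)_0, and the two-sided ideal 𝔞' := N𝔞₀N of N generated by 𝔞₀ is nonzero and satisfies 𝔞' ⊆ 𝔞 and 𝔞' ∩ N_Δ(E)_0 = 𝔞₀. -/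
/-- `NSet Δ i` is the set `N_Δ(E)_i`. -/
def NSet {K E : Type*} [Ring K] [AddCommGroup E] [Module K E]
    (Δ : Set (E →ₗ[K] E)) : ℕ → Set E
  | 0 => {e | ∀ δ ∈ Δ, δ e = 0}
  | i + 1 => {e | ∀ δ ∈ Δ, δ e ∈ NSet Δ i}

/-- Let `𝔞` be a nonzero two-sided ideal of `N = N_Δ(E)` which is `Δ`-stable and
`𝔞₀ = 𝔞 ∩ N_Δ(E)_0`.  Then `𝔞₀` is a nonzero two-sided ideal of the ring `N_Δ(E)_0`,
and the two-sided ideal `𝔞' = N𝔞₀N` of `N` generated by `𝔞₀` is nonzero, is contained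
in `𝔞`, and satisfies `𝔞' ∩ N_Δ(E)_0 = 𝔞₀`. -/
theorem stable_ideal_of_NDelta
    {K E : Type*} [Field K] [Ring E] [Algebra K E]
    (A : Subalgebra K E) (Δ : Set (E →ₗ[K] E)) (hne : Δ.Nonempty)
    (hder : ∀ δ ∈ Δ, ∀ x y : E, δ (x * y) = δ x * y + x * δ y)
    (hA : ∀ δ ∈ Δ, ∀ a ∈ A, δ a = 0)
    (NU : Set E) (hNU : NU = ⋃ i, NSet Δ i)
    -- `𝔞` is a two-sided ideal of the algebra `N_Δ(E)`:
    (𝔞 : Set E) (h_sub : 𝔞 ⊆ NU) (h0 : (0 : E) ∈ 𝔞)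
    (hadd : ∀ x ∈ 𝔞, ∀ y ∈ 𝔞, x + y ∈ 𝔞) (hneg : ∀ x ∈ 𝔞, -x ∈ 𝔞)
    (habs : ∀ n ∈ NU, ∀ x ∈ 𝔞, n * x ∈ 𝔞 ∧ x * n ∈ 𝔞)
    -- `𝔞` is `Δ`-stable and nonzero:
    (hstab : ∀ δ ∈ Δ, ∀ x ∈ 𝔞, δ x ∈ 𝔞)
    (hnz : ∃ x ∈ 𝔞, x ≠ 0)
    -- `𝔞' = N𝔞₀N`, the two-sided ideal of `N` generated by `𝔞₀ = 𝔞 ∩ N_Δ(E)_0`: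
    (𝔞' : Set E)
    (h𝔞' : 𝔞' = (AddSubgroup.closure
      {x : E | ∃ n ∈ NU, ∃ a ∈ 𝔞 ∩ NSet Δ 0, ∃ m ∈ NU, x = n * a * m} : AddSubgroup E)) :
    (∃ x ∈ 𝔞 ∩ NSet Δ 0, x ≠ 0) ∧
    (∀ x ∈ 𝔞 ∩ NSet Δ 0, ∀ y ∈ 𝔞 ∩ NSet Δ 0, x + y ∈ 𝔞 ∩ NSet Δ 0 ∧ -x ∈ 𝔞 ∩ NSet Δ 0) ∧
    (∀ n ∈ NSet Δ 0, ∀ x ∈ 𝔞 ∩ NSet Δ 0,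
      n * x ∈ 𝔞 ∩ NSet Δ 0 ∧ x * n ∈ 𝔞 ∩ NSet Δ 0) ∧
    (∃ x ∈ 𝔞', x ≠ 0) ∧
    𝔞' ⊆ 𝔞 ∧
    𝔞' ∩ NSet Δ 0 = 𝔞 ∩ NSet Δ 0 := by
  -- `1 ∈ NSet Δ 0` and `NSet Δ 0 ⊆ NU`
  have h1N0 : (1 : E) ∈ NSet Δ 0 := fun δ hδ => hA δ hδ 1 (one_mem A)
  have hN0U : NSet Δ 0 ⊆ NU := fun x hx => hNU ▸ Set.mem_iUnion.2 ⟨0, hx⟩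
  have h1U : (1 : E) ∈ NU := hN0U h1N0
  -- key: from a nonzero element of `𝔞 ∩ NSet Δ i`, get one in `𝔞 ∩ NSet Δ 0`.
  have key : ∀ i : ℕ, ∀ x, x ∈ 𝔞 → x ∈ NSet Δ i → x ≠ 0 →
      ∃ y ∈ 𝔞 ∩ NSet Δ 0, y ≠ 0 := by
    intro i
    induction i with
    | zero => exact fun x hx hx0 hxne => ⟨x, ⟨hx, hx0⟩, hxne⟩
    | succ i ih =>
      intro x hx hxN hxne
      by_cases h : ∀ δ ∈ Δ, δ x = 0
      · exact ⟨x, ⟨hx, h⟩, hxne⟩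
      · push_neg at h
        obtain ⟨δ, hδ, hδx⟩ := h
        exact ih (δ x) (hstab δ hδ x hx) (hxN δ hδ) hδx
  have claim1 : ∃ x ∈ 𝔞 ∩ NSet Δ 0, x ≠ 0 := by
    obtain ⟨x, hx, hxne⟩ := hnz
    have : x ∈ ⋃ i, NSet Δ i := hNU ▸ h_sub hx
    obtain ⟨i, hi⟩ := Set.mem_iUnion.1 this
    exact key i x hx hi hxne
  -- generating set is contained in `𝔞`
  have hgen : {x : E | ∃ n ∈ NU, ∃ a ∈ 𝔞 ∩ NSet Δ 0, ∃ m ∈ NU, x = n * a * m} ⊆ 𝔞 := by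
    rintro x ⟨n, hn, a, ⟨ha, _⟩, m, hm, rfl⟩
    exact (habs m hm (n * a) (habs n hn a ha).1).2
  -- `𝔞` is an additive subgroup
  let G : AddSubgroup E :=
    { carrier := 𝔞
      zero_mem' := h0
      add_mem' := fun ha hb => hadd _ ha _ hb
      neg_mem' := fun ha => hneg _ ha }
  have claim5 : 𝔞' ⊆ 𝔞 := by
    rw [h𝔞']
    exact fun x hx => (AddSubgroup.closure_le G).2 hgen hx
  have hmem𝔞' : ∀ x ∈ 𝔞 ∩ NSet Δ 0, x ∈ 𝔞' := by
    intro x hx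
    rw [h𝔞']
    exact AddSubgroup.subset_closure ⟨1, h1U, x, hx, 1, h1U, by simp⟩
  refine ⟨claim1, ?_, ?_, ?_, claim5, ?_⟩
  · rintro x ⟨hx, hx0⟩ y ⟨hy, hy0⟩
    refine ⟨⟨hadd x hx y hy, fun δ hδ => ?_⟩, ⟨hneg x hx, fun δ hδ => ?_⟩⟩
    · rw [map_add, hx0 δ hδ, hy0 δ hδ, add_zero]
    · rw [map_neg, hx0 δ hδ, neg_zero]
  · rintro n hn x ⟨hx, hx0⟩
    refine ⟨⟨(habs n (hN0U hn) x hx).1, fun δ hδ => ?_⟩,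
      ⟨(habs n (hN0U hn) x hx).2, fun δ hδ => ?_⟩⟩
    · rw [show δ (n * x) = δ n * x + n * δ x from hder δ hδ n x, hn δ hδ, hx0 δ hδ]
      simp
    · rw [show δ (x * n) = δ x * n + x * δ n from hder δ hδ x n, hn δ hδ, hx0 δ hδ]
      simp
  · obtain ⟨x, hx, hxne⟩ := claim1
    exact ⟨x, hmem𝔞' x hx, hxne⟩
  · apply Set.Subset.antisymm
    · rintro x ⟨hx, hx0⟩
      exact ⟨claim5 hx, hx0⟩
    · rintro x ⟨hx, hx0⟩
      exact ⟨hmem𝔞' x ⟨hx, hx0⟩, hx0⟩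
end

section
/- Let 𝔞 be a nonzero two-sided ideal of N := N_Δ(E) that is Δ-stable (δ(𝔞) ⊆ 𝔞 for all δ ∈ Δ), and let 𝔞₀ := 𝔞 ∩ N_Δ(E)_0. If the ring N_Δ(E)_0 is commutative, then [N_Δ(E)_1, 𝔞₀] ⊆ 𝔞₀, i.e. na - an ∈ 𝔞₀ for all n ∈ N_Δ(E)_1 and a ∈ 𝔞₀. -/
/-- Let `𝔞` be a nonzero `Δ`-stable two-sided ideal of `N = N_Δ(E)` and
`𝔞₀ = 𝔞 ∩ N_Δ(E)_0`.  If the ring `N_Δ(E)_0` is commutative then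
`[N_Δ(E)_1, 𝔞₀] ⊆ 𝔞₀`. -/
theorem commutator_of_stable_ideal_of_NDelta
    {K E : Type*} [Field K] [Ring E] [Algebra K E]
    (A : Subalgebra K E) (Δ : Set (E →ₗ[K] E)) (hne : Δ.Nonempty)
    (hder : ∀ δ ∈ Δ, ∀ x y : E, δ (x * y) = δ x * y + x * δ y)
    (hA : ∀ δ ∈ Δ, ∀ a ∈ A, δ a = 0)
    (NU : Set E) (hNU : NU = ⋃ i, NSet Δ i)
    -- `𝔞` is a two-sided ideal of the algebra `N_Δ(E)`:
    (𝔞 : Set E) (h_sub : 𝔞 ⊆ NU) (h0 : (0 : E) ∈ 𝔞)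
    (hadd : ∀ x ∈ 𝔞, ∀ y ∈ 𝔞, x + y ∈ 𝔞) (hneg : ∀ x ∈ 𝔞, -x ∈ 𝔞)
    (habs : ∀ n ∈ NU, ∀ x ∈ 𝔞, n * x ∈ 𝔞 ∧ x * n ∈ 𝔞)
    -- `𝔞` is `Δ`-stable and nonzero:
    (hstab : ∀ δ ∈ Δ, ∀ x ∈ 𝔞, δ x ∈ 𝔞)
    (hnz : ∃ x ∈ 𝔞, x ≠ 0)
    -- the ring `N_Δ(E)_0` is commutative:
    (hcomm : ∀ x ∈ NSet Δ 0, ∀ y ∈ NSet Δ 0, x * y = y * x) :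
    ∀ n ∈ NSet Δ 1, ∀ a ∈ 𝔞 ∩ NSet Δ 0, n * a - a * n ∈ 𝔞 ∩ NSet Δ 0 := by
  rintro n hn a ⟨ha, ha0⟩
  have ha0' : ∀ δ ∈ Δ, δ a = 0 := ha0
  have hn' : ∀ δ ∈ Δ, δ n ∈ NSet Δ 0 := hn
  constructor
  · have hnNU : n ∈ NU := hNU ▸ Set.mem_iUnion.mpr ⟨1, hn⟩
    have h1 := (habs n hnNU a ha).1
    have h2 := (habs n hnNU a ha).2
    have := hadd _ h1 _ (hneg _ h2)
    simpa [sub_eq_add_neg] using this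
  · intro δ hδ
    show δ (n * a - a * n) = 0
    rw [map_sub, hder δ hδ, hder δ hδ, ha0' δ hδ,
      hcomm (δ n) (hn' δ hδ) a ha0]
    simp
end

section
/- Let A be a K-algebra generated (as a K-algebra) by a family of elements {a_i}_{i∈I}, and set Δ := {ad_{a_i} : i ∈ I} where ad_a(x) = ax - xa. Assume that A is Δ-locally nilpotent, i.e. for every x ∈ A there exists n ≥ 1 such that δ_1(δ_2(⋯(δ_n(x))⋯)) = 0 for all δ_1, …, δ_n ∈ Δ. Then every nonzero two-sided ideal of A has nonzero intersection with the centre Z(A) of A. -/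
/-- `adSeq [c₁, …, c_n] x = ad_{c₁}(ad_{c₂}(⋯(ad_{c_n}(x))⋯))` where `ad_c(y) = cy - yc`. -/
def adSeq {A : Type*} [Ring A] (l : List A) (x : A) : A :=
  l.foldr (fun c y => c * y - y * c) x

lemma adSeq_append_single {A : Type*} [Ring A] (l : List A) (c x : A) :
    adSeq (l ++ [c]) x = adSeq l (c * x - x * c) := by
  simp [adSeq, List.foldr_append]

/-- Let `A` be a `K`-algebra generated by a family `{a_i}_{i ∈ I}` and suppose that `A` is
`Δ`-locally nilpotent for `Δ = {ad_{a_i} : i ∈ I}`, i.e. for every `x ∈ A` there is `n ≥ 1`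
such that every `n`-fold composition of the inner derivations `ad_{a_i}` kills `x`.
Then every nonzero two-sided ideal of `A` has nonzero intersection with the centre of `A`. -/
theorem ideal_meets_centre_of_ad_locally_nilpotent
    {K A : Type*} [Field K] [Ring A] [Algebra K A]
    {I : Type*} (a : I → A)
    (hgen : Algebra.adjoin K (Set.range a) = ⊤)
    (hnil : ∀ x : A, ∃ n : ℕ, 1 ≤ n ∧
      ∀ l : List A, l.length = n → (∀ c ∈ l, c ∈ Set.range a) → adSeq l x = 0) :
    ∀ J : TwoSidedIdeal A, (∃ x ∈ J, x ≠ 0) →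
      ∃ z : A, z ∈ J ∧ z ≠ 0 ∧ ∀ x : A, z * x = x * z := by
  intro J ⟨x₀, hx₀J, hx₀⟩
  -- key: by induction on n, any nonzero x ∈ J killed by all length-n ad-sequences
  -- yields a nonzero central element of J.
  suffices h : ∀ n : ℕ, ∀ x : A, x ∈ J → x ≠ 0 →
      (∀ l : List A, l.length = n → (∀ c ∈ l, c ∈ Set.range a) → adSeq l x = 0) →
      ∃ z : A, z ∈ J ∧ z ≠ 0 ∧ ∀ y : A, z * y = y * z by
    obtain ⟨n, -, hn⟩ := hnil x₀
    exact h n x₀ hx₀J hx₀ hn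
  intro n
  induction n with
  | zero =>
    intro x hxJ hx h0
    exact absurd (h0 [] rfl (by simp)) (by simpa [adSeq] using hx)
  | succ n ih =>
    intro x hxJ hx hkill
    by_cases hc : ∀ i : I, a i * x - x * (a i) = 0
    · -- x commutes with all generators, hence is central
      refine ⟨x, hxJ, hx, fun y => ?_⟩
      have hy : y ∈ Algebra.adjoin K (Set.range a) := hgen ▸ trivial
      induction hy using Algebra.adjoin_induction with
      | mem c hcmem =>
        obtain ⟨i, rfl⟩ := hcmem
        exact (sub_eq_zero.mp (hc i)).symm
      | algebraMap r =>
        rw [Algebra.commutes]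
      | add u v hu hv hu' hv' =>
        rw [mul_add, add_mul, hu', hv']
      | mul u v hu hv hu' hv' =>
        rw [← mul_assoc, hu', mul_assoc, hv', ← mul_assoc]
    · push_neg at hc
      obtain ⟨i, hi⟩ := hc
      set y := a i * x - x * (a i) with hy
      have hyJ : y ∈ J := J.sub_mem (J.mul_mem_left _ _ hxJ) (J.mul_mem_right _ _ hxJ)
      refine ih y hyJ hi ?_
      intro l hl hmem
      have := hkill (l ++ [a i]) (by simp [hl]) ?_
      · rwa [adSeq_append_single] at this
      · intro c hcmem
        rcases List.mem_append.mp hcmem with h | h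
        · exact hmem c h
        · simp at h; exact ⟨i, h.symm⟩
end

section
/- Let A be a commutative K-algebra, Ξ a nonempty subset of Der_K(A), and R the K-subalgebra of End_K(A) generated by the multiplication operators by elements of A together with the elements of Ξ. Then R is a simple ring if and only if A is Ξ-simple, i.e. the only ideals 𝔞 of A with δ(𝔞) ⊆ 𝔞 for all δ ∈ Ξ are 0 and A. -/
/-!
If `𝔞` is a `Ξ`-stable ideal, every operator in `R` stabilizes `𝔞`, so the operators of `R`
with range in `𝔞` form a two-sided ideal of `R`; it contains multiplication by any element of
`𝔞`, so simplicity of `R` forces `𝔞 = 0` or `1 ∈ 𝔞`.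

Conversely, `R` consists of differential operators in Grothendieck's sense, and taking the
commutator with a multiplication operator lowers the order. Hence a nonzero two-sided ideal `I`
of `R` contains a nonzero operator of order `0`, i.e. multiplication by some `c ≠ 0`. The
elements `c` whose multiplication operator lies in `I` form an ideal of `A`, which is `Ξ`-stable
because `⁅δ, c⁆ = δ c` for a derivation `δ`; so it contains `1`, and `I = R`.
-/

namespace TwoSidedIdeal

variable {R : Type*} [Ring R] (I : TwoSidedIdeal R)

theorem lie_mem_left {x : R} (y : R) (hx : x ∈ I) : ⁅x, y⁆ ∈ I :=
  I.sub_mem (I.mul_mem_right x y hx) (I.mul_mem_left y x hx)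

theorem lie_mem_right (x : R) {y : R} (hy : y ∈ I) : ⁅x, y⁆ ∈ I :=
  I.sub_mem (I.mul_mem_left x y hy) (I.mul_mem_right y x hy)

end TwoSidedIdeal

namespace Submodule

variable {K M : Type*} [CommRing K] [AddCommGroup M] [Module K M]

def endStabilizer (p : Submodule K M) : Subalgebra K (Module.End K M) where
  carrier := {f | ∀ x ∈ p, f x ∈ p}
  mul_mem' hf hg _ hx := hf _ (hg _ hx)
  add_mem' hf hg x hx := p.add_mem (hf x hx) (hg x hx)
  algebraMap_mem' c _ hx := p.smul_mem c hx

theorem eq_top_of_isSimpleRing {p : Submodule K M} {R : Subalgebra K (Module.End K M)}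
    [IsSimpleRing R] (hR : R ≤ p.endStabilizer) {f : Module.End K M} (hfR : f ∈ R)
    (hf0 : f ≠ 0) (hfp : ∀ x, f x ∈ p) : p = ⊤ := by
  let I : TwoSidedIdeal R := .mk' {g | ∀ x, (g : Module.End K M) x ∈ p}
    (fun _ => p.zero_mem) (fun hg hh x => p.add_mem (hg x) (hh x)) (fun hg x => p.neg_mem (hg x))
    (fun {g _} hh x => hR g.2 _ (hh x)) (fun hg x => hg _)
  have h1 : (1 : R) ∈ I := IsSimpleRing.one_mem_of_ne_zero_mem I (x := ⟨f, hfR⟩)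
    (by simpa [← Subtype.coe_inj] using hf0) ((TwoSidedIdeal.mem_mk' ..).2 hfp)
  exact eq_top_iff.2 fun x _ => (TwoSidedIdeal.mem_mk' ..).1 h1 x

end Submodule

section DifferentialOperators

attribute [local instance] LieRing.ofAssociativeRing

variable (K A : Type*) [CommRing K] [CommRing A] [Algebra K A]

/-- Grothendieck's differential operators of order `< n` (not `≤ n`): level `0` is `0`, and
level `1` consists of the multiplication operators. -/
def diffOpLT : ℕ → Submodule K (Module.End K A)
  | 0 => ⊥
  | n + 1 =>
    { carrier := {f | ∀ a, ⁅f, Algebra.lmul K A a⁆ ∈ diffOpLT n}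
      add_mem' := fun hf hg a => by rw [add_lie]; exact add_mem (hf a) (hg a)
      zero_mem' := fun a => by rw [zero_lie]; exact zero_mem _
      smul_mem' := fun c _ hf a => by rw [smul_lie]; exact Submodule.smul_mem _ c (hf a) }

variable {K A}

theorem mem_diffOpLT_zero {f : Module.End K A} : f ∈ diffOpLT K A 0 ↔ f = 0 :=
  Submodule.mem_bot K

theorem diffOpLT_mono : Monotone (diffOpLT K A) := by
  refine monotone_nat_of_le_succ fun n => ?_
  induction n with
  | zero => exact bot_le
  | succ n ih => exact fun f hf a => ih (hf a)

theorem lmul_mem_diffOpLT_one (a : A) : Algebra.lmul K A a ∈ diffOpLT K A 1 := fun b =>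
  mem_diffOpLT_zero.2 (((Commute.all a b).map (Algebra.lmul K A)).lie_eq)

theorem mul_mem_diffOpLT {n m : ℕ} {f g : Module.End K A} (hf : f ∈ diffOpLT K A n)
    (hg : g ∈ diffOpLT K A m) : f * g ∈ diffOpLT K A (n + m) := by
  induction n generalizing m f g with
  | zero => simp [mem_diffOpLT_zero.1 hf, zero_mem]
  | succ n ihn =>
    induction m generalizing g with
    | zero => simp [mem_diffOpLT_zero.1 hg, zero_mem]
    | succ m ihm =>
      intro a
      show _ ∈ diffOpLT K A (n + 1 + m)
      have hlie : ⁅f * g, Algebra.lmul K A a⁆ =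
          f * ⁅g, Algebra.lmul K A a⁆ + ⁅f, Algebra.lmul K A a⁆ * g := by
        simp only [Ring.lie_def, mul_sub, sub_mul, mul_assoc]; abel
      rw [hlie]
      refine add_mem (ihm (hg a)) ?_
      rw [Nat.add_right_comm]
      exact ihn (hf a) hg

theorem lie_lmul_eq_lmul_apply {δ : Module.End K A}
    (hδ : ∀ x y : A, δ (x * y) = δ x * y + x * δ y) (a : A) :
    ⁅δ, Algebra.lmul K A a⁆ = Algebra.lmul K A (δ a) := by
  ext x
  simp [Ring.lie_def, hδ]

theorem mem_diffOpLT_two_of_leibniz {δ : Module.End K A}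
    (hδ : ∀ x y : A, δ (x * y) = δ x * y + x * δ y) : δ ∈ diffOpLT K A 2 := fun a => by
  rw [lie_lmul_eq_lmul_apply hδ]
  exact lmul_mem_diffOpLT_one _

variable (K A) in
def diffOps : Subalgebra K (Module.End K A) where
  carrier := {f | ∃ n, f ∈ diffOpLT K A n}
  mul_mem' := fun ⟨n, hf⟩ ⟨m, hg⟩ => ⟨n + m, mul_mem_diffOpLT hf hg⟩
  add_mem' := fun ⟨n, hf⟩ ⟨m, hg⟩ =>
    ⟨max n m, add_mem (diffOpLT_mono (le_max_left n m) hf)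
      (diffOpLT_mono (le_max_right n m) hg)⟩
  algebraMap_mem' c :=
    ⟨1, (Algebra.lmul K A).commutes c ▸ lmul_mem_diffOpLT_one (algebraMap K A c)⟩

theorem eq_lmul_of_mem_diffOpLT_one {f : Module.End K A} (hf : f ∈ diffOpLT K A 1) :
    f = Algebra.lmul K A (f 1) := by
  ext x
  have := LinearMap.congr_fun (mem_diffOpLT_zero.1 (hf x)) 1
  simpa [Ring.lie_def, sub_eq_zero, mul_comm] using this

theorem exists_ne_zero_mem_diffOpLT_one {S : Set (Module.End K A)}
    (hS : ∀ f ∈ S, ∀ a, ⁅f, Algebra.lmul K A a⁆ ∈ S) {n : ℕ} {f : Module.End K A}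
    (hfS : f ∈ S) (hf0 : f ≠ 0) (hfn : f ∈ diffOpLT K A n) :
    ∃ g ∈ S, g ≠ 0 ∧ g ∈ diffOpLT K A 1 := by
  induction n generalizing f with
  | zero => exact absurd (mem_diffOpLT_zero.1 hfn) hf0
  | succ n ih =>
    by_cases hcomm : ∀ a, ⁅f, Algebra.lmul K A a⁆ = 0
    · exact ⟨f, hfS, hf0, fun a => mem_diffOpLT_zero.2 (hcomm a)⟩
    · push Not at hcomm
      obtain ⟨a, ha⟩ := hcomm
      exact ih (hS f hfS a) ha (hfn a)

end DifferentialOperators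

section Simplicity

variable {K A : Type*} [CommRing K] [CommRing A] [Algebra K A]

theorem Ideal.eq_bot_or_eq_top_of_isSimpleRing {R : Subalgebra K (Module.End K A)}
    [IsSimpleRing R] (hlmul : ∀ a, Algebra.lmul K A a ∈ R) {𝔞 : Ideal A}
    (h𝔞 : R ≤ (𝔞.restrictScalars K).endStabilizer) : 𝔞 = ⊥ ∨ 𝔞 = ⊤ := by
  refine or_iff_not_imp_left.2 fun hbot => ?_
  obtain ⟨a, ha, ha0⟩ := Submodule.exists_mem_ne_zero_of_ne_bot hbot
  have hla : Algebra.lmul K A a ≠ 0 := fun h => ha0 (by simpa using LinearMap.congr_fun h 1)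
  exact (Submodule.restrictScalars_eq_top_iff K A A).1 <|
    Submodule.eq_top_of_isSimpleRing h𝔞 (hlmul a) hla fun x => 𝔞.mul_mem_right x ha

theorem isSimpleRing_of_stable_ideals_trivial [Nontrivial A] {Ξ : Set (Module.End K A)}
    (hder : ∀ δ ∈ Ξ, ∀ x y : A, δ (x * y) = δ x * y + x * δ y)
    {R : Subalgebra K (Module.End K A)} (hlmul : ∀ a, Algebra.lmul K A a ∈ R) (hΞ : Ξ ⊆ R)
    (hdiff : R ≤ diffOps K A)
    (hsimple : ∀ 𝔞 : Ideal A, (∀ δ ∈ Ξ, ∀ a ∈ 𝔞, δ a ∈ 𝔞) → 𝔞 = ⊥ ∨ 𝔞 = ⊤) :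
    IsSimpleRing R := by
  refine .of_eq_bot_or_eq_top fun I => or_iff_not_imp_left.2 fun hI => ?_
  obtain ⟨f, hfI, hf0⟩ := SetLike.exists_of_lt (bot_lt_iff_ne_bot.2 hI)
  let ι : A →ₐ[K] R := (Algebra.lmul K A).codRestrict R hlmul
  have hS : ∀ g ∈ Subtype.val '' (I : Set R), ∀ a,
      ⁅g, Algebra.lmul K A a⁆ ∈ Subtype.val '' (I : Set R) := by
    rintro _ ⟨g, hg, rfl⟩ a
    exact ⟨⁅g, ι a⁆, I.lie_mem_left _ hg, rfl⟩
  obtain ⟨n, hn⟩ := hdiff f.2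
  obtain ⟨_, ⟨g, hgI, rfl⟩, hg0, hg1⟩ := exists_ne_zero_mem_diffOpLT_one hS ⟨f, hfI, rfl⟩
    (fun h => hf0 ((TwoSidedIdeal.mem_bot _).2 (Subtype.ext h))) hn
  have hιg : ι (g.1 1) = g := Subtype.ext (eq_lmul_of_mem_diffOpLT_one hg1).symm
  let 𝔞 : Ideal A := (I.comap ι).asIdeal
  have hmem (c : A) : c ∈ 𝔞 ↔ ι c ∈ I :=
    TwoSidedIdeal.mem_asIdeal.trans (TwoSidedIdeal.mem_comap ι)
  have h𝔞 : ∀ δ ∈ Ξ, ∀ c ∈ 𝔞, δ c ∈ 𝔞 := by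
    intro δ hδ c hc
    have hιδ : ι (δ c) = ⁅(⟨δ, hΞ hδ⟩ : R), ι c⁆ :=
      Subtype.ext (lie_lmul_eq_lmul_apply (hder δ hδ) c).symm
    rw [hmem, hιδ]
    exact I.lie_mem_right _ ((hmem c).1 hc)
  rcases hsimple 𝔞 h𝔞 with h | h
  · have hg1 : g.1 1 ∈ 𝔞 := by rw [hmem, hιg]; exact hgI
    rw [h, Ideal.mem_bot] at hg1
    exact (hg0 (by rw [← hιg, hg1, map_zero]; rfl)).elim
  · exact I.one_mem_iff.1 (map_one ι ▸ (hmem 1).1 (h ▸ Submodule.mem_top))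

end Simplicity

theorem derivation_ring_simple_iff_Xi_simple_general
    {K A : Type*} [Field K] [CommRing A] [Algebra K A] [Nontrivial A]
    (Ξ : Set (Module.End K A))
    (hder : ∀ δ ∈ Ξ, ∀ x y : A, δ (x * y) = δ x * y + x * δ y)
    (R : Subalgebra K (Module.End K A))
    (hR : R = Algebra.adjoin K (Set.range ⇑(Algebra.lmul K A) ∪ Ξ)) :
    IsSimpleRing R ↔
      ∀ 𝔞 : Ideal A, (∀ δ ∈ Ξ, ∀ a ∈ 𝔞, δ a ∈ 𝔞) → 𝔞 = ⊥ ∨ 𝔞 = ⊤ := by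
  have hlmul (a : A) : Algebra.lmul K A a ∈ R := hR ▸ Algebra.subset_adjoin (.inl ⟨a, rfl⟩)
  have hΞ : Ξ ⊆ R := fun δ hδ => hR ▸ Algebra.subset_adjoin (.inr hδ)
  refine ⟨fun _ 𝔞 h𝔞 => Ideal.eq_bot_or_eq_top_of_isSimpleRing hlmul ?_,
    isSimpleRing_of_stable_ideals_trivial hder hlmul hΞ ?_⟩
  · exact hR ▸ Algebra.adjoin_le (Set.union_subset
      (Set.range_subset_iff.2 fun a _ hx => 𝔞.mul_mem_left a hx) h𝔞)
  · exact hR ▸ Algebra.adjoin_le (Set.union_subset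
      (Set.range_subset_iff.2 fun a => ⟨1, lmul_mem_diffOpLT_one a⟩)
      fun δ hδ => ⟨2, mem_diffOpLT_two_of_leibniz (hder δ hδ)⟩)

/-- Let `A` be a commutative `K`-algebra, `Ξ` a nonempty set of `K`-linear derivations of
`A` and `R` the subalgebra of `End_K(A)` generated by the multiplication operators by
elements of `A` together with `Ξ`.  Then `R` is a simple ring iff `A` is `Ξ`-simple
(the only `Ξ`-stable ideals of `A` are `0` and `A`). -/
theorem derivation_ring_simple_iff_Xi_simple
    {K A : Type*} [Field K] [CommRing A] [Algebra K A] [Nontrivial A]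
    (Ξ : Set (Module.End K A)) (hne : Ξ.Nonempty)
    (hder : ∀ δ ∈ Ξ, ∀ x y : A, δ (x * y) = δ x * y + x * δ y)
    (R : Subalgebra K (Module.End K A))
    (hR : R = Algebra.adjoin K (Set.range ⇑(Algebra.lmul K A) ∪ Ξ)) :
    IsSimpleRing R ↔
      ∀ 𝔞 : Ideal A, (∀ δ ∈ Ξ, ∀ a ∈ 𝔞, δ a ∈ 𝔞) → 𝔞 = ⊥ ∨ 𝔞 = ⊤ :=
  derivation_ring_simple_iff_Xi_simple_general Ξ hder R hR
end

section
/- Let R be a ring and S the multiplicative submonoid of R generated by a family {s_λ}_{λ∈Λ} of ad-locally nilpotent elements. Then S is a left and right denominator set of R; that is: (i) for all r ∈ R and s ∈ S there exist r₁ ∈ R and s₁ ∈ S with s₁r = r₁s (left Ore condition); (ii) for all r ∈ R and s ∈ S there exist r₂ ∈ R and s₂ ∈ S with rs₂ = sr₂ (right Ore condition); (iii) if rs = 0 for some r ∈ R, s ∈ S, then tr = 0 for some t ∈ S; (iv) if sr = 0 for some r ∈ R, s ∈ S, then rt = 0 for some t ∈ S. -/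
private lemma adln_left {R : Type*} [Ring R] (s : R) :
    ∀ n : ℕ, 1 ≤ n → ∀ r : R, (fun x => s * x - x * s)^[n] r = 0 →
      ∃ r' : R, s ^ n * r = r' * s := by
  intro n
  induction n with
  | zero => omega
  | succ n ih =>
    intro _ r h
    rcases Nat.eq_zero_or_pos n with h0 | h1
    · subst h0
      have h' : s * r = r * s := by
        have h2 : s * r - r * s = 0 := h
        rwa [sub_eq_zero] at h2
      exact ⟨r, by rw [pow_one, h']⟩
    · obtain ⟨r₁, h₁⟩ := ih h1 (s * r - r * s)
        (by rw [← Function.iterate_succ_apply]; exact h)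
      refine ⟨r₁ + s ^ n * r, ?_⟩
      calc s ^ (n + 1) * r = s ^ n * (s * r - r * s) + s ^ n * r * s := by
            rw [pow_succ]; noncomm_ring
        _ = r₁ * s + s ^ n * r * s := by rw [h₁]
        _ = (r₁ + s ^ n * r) * s := by rw [add_mul]

private lemma adln_right {R : Type*} [Ring R] (s : R) :
    ∀ n : ℕ, 1 ≤ n → ∀ r : R, (fun x => s * x - x * s)^[n] r = 0 →
      ∃ r' : R, r * s ^ n = s * r' := by
  intro n
  induction n with
  | zero => omega
  | succ n ih =>
    intro _ r h
    rcases Nat.eq_zero_or_pos n with h0 | h1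
    · subst h0
      have h' : s * r = r * s := by
        have h2 : s * r - r * s = 0 := h
        rwa [sub_eq_zero] at h2
      exact ⟨r, by rw [pow_one, h']⟩
    · obtain ⟨r₁, h₁⟩ := ih h1 (s * r - r * s)
        (by rw [← Function.iterate_succ_apply]; exact h)
      refine ⟨r * s ^ n - r₁, ?_⟩
      calc r * s ^ (n + 1) = (r * s) * s ^ n := by rw [pow_succ', ← mul_assoc]
        _ = (s * r) * s ^ n - (s * r - r * s) * s ^ n := by
            rw [← sub_mul, sub_sub_cancel]
        _ = s * (r * s ^ n) - s * r₁ := by rw [h₁, mul_assoc]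
        _ = s * (r * s ^ n - r₁) := by rw [mul_sub]

private lemma adln_ann_left {R : Type*} [Ring R] (s r : R) (hrs : r * s = 0) :
    ∀ k : ℕ, (fun x => s * x - x * s)^[k] r = s ^ k * r := by
  intro k
  induction k with
  | zero => simp
  | succ k ih =>
    rw [Function.iterate_succ_apply', ih]
    show s * (s ^ k * r) - s ^ k * r * s = s ^ (k + 1) * r
    rw [mul_assoc, hrs, mul_zero, sub_zero, pow_succ', mul_assoc]

private lemma adln_ann_right {R : Type*} [Ring R] (s r : R) (hsr : s * r = 0) :
    ∀ k : ℕ, (fun x => s * x - x * s)^[k] r = (-1 : R) ^ k * (r * s ^ k) := by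
  intro k
  induction k with
  | zero => simp
  | succ k ih =>
    rw [Function.iterate_succ_apply', ih]
    show s * ((-1 : R) ^ k * (r * s ^ k)) - (-1 : R) ^ k * (r * s ^ k) * s
      = (-1 : R) ^ (k + 1) * (r * s ^ (k + 1))
    have hc : Commute s ((-1 : R) ^ k) := ((Commute.neg_one_left s).pow_left k).symm
    rw [← mul_assoc, hc.eq, mul_assoc, ← mul_assoc s r, hsr, zero_mul, mul_zero,
      zero_sub, pow_succ, pow_succ]
    noncomm_ring

/-- Let `R` be a ring and `S` the multiplicative submonoid generated by a family of
ad-locally nilpotent elements `s_λ` (for each `λ` and each `r ∈ R` some iterate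
`ad_{s_λ}^n(r)` vanishes, where `ad_s(r) = sr - rs`).  Then `S` is a left and right
denominator set of `R`: both Ore conditions hold, and left (resp. right) annihilation
by an element of `S` implies right (resp. left) annihilation by an element of `S`. -/
theorem submonoid_of_ad_locally_nilpotent_is_denominator_set
    {R : Type*} [Ring R] {Λ : Type*} (s : Λ → R)
    (hnil : ∀ (l : Λ) (r : R), ∃ n : ℕ, 1 ≤ n ∧
      (fun x => s l * x - x * s l)^[n] r = 0)
    (S : Submonoid R) (hS : S = Submonoid.closure (Set.range s)) :
    -- (i) left Ore condition:
    (∀ r : R, ∀ t ∈ S, ∃ t₁ ∈ S, ∃ r₁ : R, t₁ * r = r₁ * t) ∧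
    -- (ii) right Ore condition:
    (∀ r : R, ∀ t ∈ S, ∃ t₂ ∈ S, ∃ r₂ : R, r * t₂ = t * r₂) ∧
    -- (iii):
    (∀ r : R, ∀ t ∈ S, r * t = 0 → ∃ t' ∈ S, t' * r = 0) ∧
    -- (iv):
    (∀ r : R, ∀ t ∈ S, t * r = 0 → ∃ t' ∈ S, r * t' = 0) := by
  subst hS
  refine ⟨?_, ?_, ?_, ?_⟩
  · -- left Ore
    intro r t ht
    revert r
    induction ht using Submonoid.closure_induction with
    | mem x hx =>
      obtain ⟨l, rfl⟩ := hx
      intro r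
      obtain ⟨n, hn1, hn⟩ := hnil l r
      obtain ⟨r', hr'⟩ := adln_left (s l) n hn1 r hn
      exact ⟨(s l) ^ n, pow_mem (Submonoid.subset_closure (Set.mem_range_self l)) n, r', hr'⟩
    | one => exact fun r => ⟨1, one_mem _, r, by rw [one_mul, mul_one]⟩
    | mul a b ha hb iha ihb =>
      intro r
      obtain ⟨u, hu, r', hr'⟩ := ihb r
      obtain ⟨v, hv, r'', hr''⟩ := iha r'
      refine ⟨v * u, mul_mem hv hu, r'', ?_⟩
      rw [mul_assoc, hr', ← mul_assoc, hr'', mul_assoc]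
  · -- right Ore
    intro r t ht
    revert r
    induction ht using Submonoid.closure_induction with
    | mem x hx =>
      obtain ⟨l, rfl⟩ := hx
      intro r
      obtain ⟨n, hn1, hn⟩ := hnil l r
      obtain ⟨r', hr'⟩ := adln_right (s l) n hn1 r hn
      exact ⟨(s l) ^ n, pow_mem (Submonoid.subset_closure (Set.mem_range_self l)) n, r', hr'⟩
    | one => exact fun r => ⟨1, one_mem _, r, by rw [one_mul, mul_one]⟩
    | mul a b ha hb iha ihb =>
      intro r
      obtain ⟨u, hu, r', hr'⟩ := iha r
      obtain ⟨v, hv, r'', hr''⟩ := ihb r'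
      refine ⟨u * v, mul_mem hu hv, r'', ?_⟩
      rw [← mul_assoc, hr', mul_assoc, hr'', ← mul_assoc]
  · -- (iii)
    intro r t ht
    revert r
    induction ht using Submonoid.closure_induction with
    | mem x hx =>
      obtain ⟨l, rfl⟩ := hx
      intro r hr
      obtain ⟨n, hn1, hn⟩ := hnil l r
      refine ⟨(s l) ^ n, pow_mem (Submonoid.subset_closure (Set.mem_range_self l)) n, ?_⟩
      rw [← adln_ann_left (s l) r hr n]
      exact hn
    | one => exact fun r hr => ⟨1, one_mem _, by rw [one_mul]; rwa [mul_one] at hr⟩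
    | mul a b ha hb iha ihb =>
      intro r hr
      rw [← mul_assoc] at hr
      obtain ⟨u, hu, hu0⟩ := ihb (r * a) hr
      rw [← mul_assoc] at hu0
      obtain ⟨v, hv, hv0⟩ := iha (u * r) hu0
      exact ⟨v * u, mul_mem hv hu, by rw [mul_assoc]; exact hv0⟩
  · -- (iv)
    intro r t ht
    revert r
    induction ht using Submonoid.closure_induction with
    | mem x hx =>
      obtain ⟨l, rfl⟩ := hx
      intro r hr
      obtain ⟨n, hn1, hn⟩ := hnil l r
      refine ⟨(s l) ^ n, pow_mem (Submonoid.subset_closure (Set.mem_range_self l)) n, ?_⟩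
      have h := adln_ann_right (s l) r hr n
      rw [hn] at h
      have hne : (-1 : R) ^ n * ((-1 : R) ^ n * (r * (s l) ^ n)) = 0 := by
        rw [← h, mul_zero]
      rwa [← mul_assoc, ← pow_add, ← two_mul, pow_mul, neg_one_sq, one_pow,
        one_mul] at hne
    | one => exact fun r hr => ⟨1, one_mem _, by rw [mul_one]; rwa [one_mul] at hr⟩
    | mul a b ha hb iha ihb =>
      intro r hr
      rw [mul_assoc] at hr
      obtain ⟨u, hu, hu0⟩ := iha (b * r) hr
      rw [mul_assoc] at hu0
      obtain ⟨v, hv, hv0⟩ := ihb (r * u) hu0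
      exact ⟨u * v, mul_mem hu hv, by rw [← mul_assoc]; exact hv0⟩
end

section
/- Let R be a ring and S the multiplicative submonoid of R generated by a family of ad-locally nilpotent elements (so S is a left and right denominator set of R). Then for every two-sided ideal I of R, the subset S⁻¹I := {s⁻¹·ι(x) : s ∈ S, x ∈ I} of the left Ore localization S⁻¹R (where ι : R → S⁻¹R is the canonical map) is a two-sided ideal of S⁻¹R; equivalently, the left ideal of S⁻¹R generated by ι(I) coincides with the right ideal generated by ι(I). -/
private lemma aux_adnil {R : Type*} [Ring R] (I : TwoSidedIdeal R) (a : R) :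
    ∀ (m : ℕ) (x : R), (fun z => a * z - z * a)^[m] x = 0 → x ∈ I →
      ∃ x' ∈ I, a ^ m * x = x' * a := by
  intro m
  induction m with
  | zero =>
    intro x hx hxI
    simp only [Function.iterate_zero, id_eq] at hx
    exact ⟨0, I.zero_mem, by simp [hx]⟩
  | succ m ih =>
    intro x hx hxI
    have hδI : (a * x - x * a) ∈ I :=
      I.sub_mem (I.mul_mem_left _ _ hxI) (I.mul_mem_right _ _ hxI)
    have hx' : (fun z => a * z - z * a)^[m] (a * x - x * a) = 0 := by
      rwa [Function.iterate_succ_apply] at hx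
    obtain ⟨y', hy'I, hy'⟩ := ih _ hx' hδI
    refine ⟨a ^ m * x + y', I.add_mem (I.mul_mem_left _ _ hxI) hy'I, ?_⟩
    have key : a ^ m * (a * x) - a ^ m * (x * a) = y' * a := by
      rw [← mul_sub]; exact hy'
    have h2 : a ^ m * (a * x) = a ^ m * (x * a) + y' * a := by
      rw [← key]; abel
    rw [pow_succ, mul_assoc, h2]
    noncomm_ring

/-- Let `R` be a ring, `S` the multiplicative submonoid generated by a family of
ad-locally nilpotent elements, and `ι : R → Q` a left Ore localization of `R` at `S`
(every element of `ι(S)` is invertible, every element of `Q` is a left fraction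
`(ι t)⁻¹ ι r`, and `ker ι` is the `S`-torsion).  Then for every two-sided ideal `I`
of `R` the set `S⁻¹I = {(ι t)⁻¹ ι x : t ∈ S, x ∈ I}` is a two-sided ideal of `Q`. -/
theorem localization_of_two_sided_ideal_is_two_sided
    {R : Type*} [Ring R] {Λ : Type*} (s : Λ → R)
    (hnil : ∀ (l : Λ) (r : R), ∃ n : ℕ, 1 ≤ n ∧
      (fun x => s l * x - x * s l)^[n] r = 0)
    (S : Submonoid R) (hS : S = Submonoid.closure (Set.range s))
    {Q : Type*} [Ring Q] (ι : R →+* Q)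
    (hunit : ∀ t ∈ S, IsUnit (ι t))
    (hfrac : ∀ y : Q, ∃ t ∈ S, ∃ r : R, ι t * y = ι r)
    (hker : ∀ r : R, ι r = 0 ↔ ∃ t ∈ S, t * r = 0)
    (I : TwoSidedIdeal R)
    -- `S⁻¹I = {(ι t)⁻¹·ι x : t ∈ S, x ∈ I}`:
    (T : Set Q) (hT : T = {y : Q | ∃ t ∈ S, ∃ x ∈ I, ι t * y = ι x}) :
    ∃ J : TwoSidedIdeal Q, (J : Set Q) = T := by
  -- Left Ore condition, derived from the localization axioms.
  have L0 : ∀ t ∈ S, ∀ r : R, ∃ t' ∈ S, ∃ r' : R, t' * r = r' * t := by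
    intro t ht r
    obtain ⟨e, he⟩ := hunit t ht
    obtain ⟨t', ht', r'', heq⟩ := hfrac (ι r * ↑e⁻¹)
    have h3 : ι t' * ι r = ι r'' * ι t := by
      calc ι t' * ι r = ι t' * (ι r * ↑e⁻¹) * ↑e := by
            rw [mul_assoc, mul_assoc, Units.inv_mul, mul_one]
        _ = ι r'' * ι t := by rw [heq, he]
    have h4 : ι (t' * r - r'' * t) = 0 := by
      rw [map_sub, map_mul, map_mul, h3, sub_self]
    obtain ⟨v, hv, hveq⟩ := (hker _).mp h4
    refine ⟨v * t', S.mul_mem hv ht', v * r'', ?_⟩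
    rw [mul_sub, sub_eq_zero] at hveq
    rw [mul_assoc, mul_assoc]
    exact hveq
  -- Compatibility of `I` with `S`: elements of `I` can be moved across elements of `S`.
  have L1 : ∀ t ∈ S, ∀ x ∈ I, ∃ t' ∈ S, ∃ x' ∈ I, t' * x = x' * t := by
    intro t ht
    rw [hS] at ht
    induction ht using Submonoid.closure_induction with
    | mem a ha =>
      intro x hx
      obtain ⟨l, rfl⟩ := ha
      obtain ⟨n, -, hn⟩ := hnil l x
      obtain ⟨x', hx'I, hx'⟩ := aux_adnil I (s l) n x hn hx
      refine ⟨(s l) ^ n, ?_, x', hx'I, hx'⟩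
      rw [hS]
      exact pow_mem (Submonoid.subset_closure (Set.mem_range_self l)) n
    | one =>
      intro x hx
      exact ⟨1, S.one_mem, x, hx, by rw [one_mul, mul_one]⟩
    | mul a b ha hb iha ihb =>
      intro x hx
      obtain ⟨tb, htb, xb, hxb, hb'⟩ := ihb x hx
      obtain ⟨ta, hta, xa, hxa, ha'⟩ := iha xb hxb
      refine ⟨ta * tb, S.mul_mem hta htb, xa, hxa, ?_⟩
      calc ta * tb * x = ta * (tb * x) := by rw [mul_assoc]
        _ = ta * (xb * b) := by rw [hb']
        _ = (ta * xb) * b := by rw [mul_assoc]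
        _ = (xa * a) * b := by rw [ha']
        _ = xa * (a * b) := by rw [mul_assoc]
  refine ⟨TwoSidedIdeal.mk' {y : Q | ∃ t ∈ S, ∃ x ∈ I, ι t * y = ι x}
      ⟨1, S.one_mem, 0, I.zero_mem, by simp⟩
      ?_ ?_ ?_ ?_, by rw [TwoSidedIdeal.coe_mk', hT]⟩
  · -- add
    rintro y₁ y₂ ⟨t₁, ht₁, x₁, hx₁, h₁⟩ ⟨t₂, ht₂, x₂, hx₂, h₂⟩
    obtain ⟨u, hu, c, huc⟩ := L0 t₁ ht₁ t₂
    refine ⟨u * t₂, S.mul_mem hu ht₂, c * x₁ + u * x₂,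
      I.add_mem (I.mul_mem_left _ _ hx₁) (I.mul_mem_left _ _ hx₂), ?_⟩
    calc ι (u * t₂) * (y₁ + y₂) = ι (u * t₂) * y₁ + ι (u * t₂) * y₂ := by
          rw [mul_add]
      _ = ι (c * t₁) * y₁ + ι (u * t₂) * y₂ := by rw [huc]
      _ = ι c * (ι t₁ * y₁) + ι u * (ι t₂ * y₂) := by
          rw [map_mul, map_mul, mul_assoc, mul_assoc]
      _ = ι (c * x₁ + u * x₂) := by rw [h₁, h₂, map_add, map_mul, map_mul]
  · -- neg
    rintro y ⟨t, ht, x, hx, h⟩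
    exact ⟨t, ht, -x, I.neg_mem hx, by rw [mul_neg, h, map_neg]⟩
  · -- mul_left : q * y
    rintro q y ⟨t, ht, x, hx, h⟩
    obtain ⟨u, hu, r, hur⟩ := hfrac q
    obtain ⟨t', ht', r', h'⟩ := L0 t ht r
    refine ⟨t' * u, S.mul_mem ht' hu, r' * x, I.mul_mem_left _ _ hx, ?_⟩
    calc ι (t' * u) * (q * y) = ι t' * (ι u * q) * y := by
          rw [map_mul, mul_assoc, mul_assoc, mul_assoc]
      _ = ι (t' * r) * y := by rw [hur, map_mul]
      _ = ι r' * (ι t * y) := by rw [h', map_mul, mul_assoc]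
      _ = ι (r' * x) := by rw [h, map_mul]
  · -- mul_right : y * q
    rintro y q ⟨t, ht, x, hx, h⟩
    obtain ⟨u, hu, r, hur⟩ := hfrac q
    obtain ⟨v, hv, x'', hvx, hvxe⟩ := L1 u hu x hx
    refine ⟨v * t, S.mul_mem hv ht, x'' * r, I.mul_mem_right _ _ hvx, ?_⟩
    calc ι (v * t) * (y * q) = ι v * (ι t * y) * q := by
          rw [map_mul, mul_assoc, mul_assoc, mul_assoc]
      _ = ι (v * x) * q := by rw [h, map_mul]
      _ = ι x'' * (ι u * q) := by rw [hvxe, map_mul, mul_assoc]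
      _ = ι (x'' * r) := by rw [hur, map_mul]
end

section
/- Let A be a K-subalgebra of a K-algebra E, Δ ⊆ Der_A(E) nonempty, and S a left Ore set of E consisting of regular elements (non-zero-divisors) such that S ⊆ N_Δ(E)_0. Then S satisfies the left Ore condition in the subalgebra N_Δ(E): for every n ∈ N_Δ(E) and s ∈ S there exist t ∈ S and e ∈ N_Δ(E) with tn = es; consequently S is a regular left Ore set of N_Δ(E). -/
/-- Let `A` be a subalgebra of a `K`-algebra `E`, `Δ ⊆ Der_A(E)` nonempty, and `S` a left
Ore set of `E` consisting of regular elements with `S ⊆ N_Δ(E)_0`.  Then `S` satisfies the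
left Ore condition in `N_Δ(E)`: for all `n ∈ N_Δ(E)` and `t ∈ S` there are `t' ∈ S` and
`e ∈ N_Δ(E)` with `t'n = et`; hence `S` is a regular left Ore set of `N_Δ(E)`. -/
theorem ore_set_of_NDelta
    {K E : Type*} [Field K] [Ring E] [Algebra K E]
    (A : Subalgebra K E) (Δ : Set (E →ₗ[K] E)) (hne : Δ.Nonempty)
    (hder : ∀ δ ∈ Δ, ∀ x y : E, δ (x * y) = δ x * y + x * δ y)
    (hA : ∀ δ ∈ Δ, ∀ a ∈ A, δ a = 0)
    (S : Submonoid E)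
    (hreg : ∀ t ∈ S, ∀ x : E, (t * x = 0 → x = 0) ∧ (x * t = 0 → x = 0))
    (hOre : ∀ e : E, ∀ t ∈ S, ∃ t' ∈ S, ∃ e' : E, t' * e = e' * t)
    (hS0 : (S : Set E) ⊆ NSet Δ 0) :
    ∀ n ∈ ⋃ i, NSet Δ i, ∀ t ∈ S,
      ∃ t' ∈ S, ∃ e ∈ ⋃ i, NSet Δ i, t' * n = e * t := by
  have key : ∀ i (n t' t e' : E), (∀ δ ∈ Δ, δ t' = 0) → (∀ δ ∈ Δ, δ t = 0) →
      (∀ x : E, x * t = 0 → x = 0) → n ∈ NSet Δ i → t' * n = e' * t → e' ∈ NSet Δ i := by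
    intro i
    induction i with
    | zero =>
      intro n t' t e' ht' ht0 htreg hn heq δ hδ
      have h1 := congrArg δ heq
      rw [hder δ hδ, hder δ hδ, ht' δ hδ, ht0 δ hδ, hn δ hδ, zero_mul, mul_zero,
        mul_zero, zero_add, add_zero] at h1
      exact htreg _ h1.symm
    | succ i ih =>
      intro n t' t e' ht' ht0 htreg hn heq δ hδ
      apply ih (δ n) t' t (δ e') ht' ht0 htreg (hn δ hδ)
      have h1 := congrArg δ heq
      rw [hder δ hδ, hder δ hδ, ht' δ hδ, ht0 δ hδ, zero_mul, mul_zero,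
        zero_add, add_zero] at h1
      exact h1
  intro n hn t ht
  simp only [Set.mem_iUnion] at hn ⊢
  obtain ⟨i, hni⟩ := hn
  obtain ⟨t', ht', e', heq⟩ := hOre n t ht
  exact ⟨t', ht', e', ⟨i, key i n t' t e' (fun δ hδ => hS0 ht' δ hδ)
    (fun δ hδ => hS0 ht δ hδ) (fun x hx => (hreg t ht x).2 hx) hni heq⟩, heq⟩
end

section
/- Let K be a field of characteristic zero. In E := End_K(K[x]), let X denote the operator of multiplication by x, ∂ the derivative d/dx, A₁ the K-subalgebra generated by X and ∂ (the first Weyl algebra), h := X∂, and R₂ the K-subalgebra generated by h∂², h∂, h and X. Then R₂ is a maximal subalgebra of A₁: R₂ ≠ A₁, and every K-subalgebra B of A₁ with R₂ ⊆ B ⊆ A₁ satisfies B = R₂ or B = A₁. -/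
section aux
variable {K E : Type*} [Field K] [Ring E] [Algebra K E]

lemma dpow_mul_X (Xop d : E) (hc : d * Xop = Xop * d + 1) :
    ∀ m : ℕ, d ^ (m + 1) * Xop = Xop * d ^ (m + 1) + ((m + 1 : ℕ) : K) • d ^ m := by
  intro m
  induction m with
  | zero => simpa using hc
  | succ n ih =>
    have h0 : d ^ (n + 2) * Xop = d * (d ^ (n + 1) * Xop) := by
      rw [← mul_assoc, ← pow_succ']
    rw [h0, ih, mul_add, ← mul_assoc, hc, add_mul, one_mul, mul_smul_comm,
      mul_assoc, ← pow_succ', ← pow_succ']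
    push_cast
    module

lemma Xdi_mul_Xdj (Xop d : E) (hc : d * Xop = Xop * d + 1) (i j : ℕ) :
    (Xop * d ^ (i + 1)) * (Xop * d ^ j)
      = Xop * Xop * d ^ (i + 1 + j) + ((i + 1 : ℕ) : K) • (Xop * d ^ (i + j)) := by
  have h1 : (Xop * d ^ (i + 1)) * (Xop * d ^ j) = Xop * ((d ^ (i+1) * Xop) * d ^ j) := by
    rw [mul_assoc, ← mul_assoc (d ^ (i+1))]
  rw [h1, dpow_mul_X (K := K) Xop d hc, add_mul, mul_add, smul_mul_assoc, mul_smul_comm,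
    mul_assoc, ← pow_add, mul_assoc, ← pow_add, ← mul_assoc]

lemma Xd_step (Xop d : E) (hc : d * Xop = Xop * d + 1) (m : ℕ) :
    (Xop * d ^ (m + 3)) * (Xop * d ^ 2) - (Xop * d ^ 2) * (Xop * d ^ (m + 3))
      = ((m + 1 : ℕ) : K) • (Xop * d ^ (m + 4)) := by
  have h1 := Xdi_mul_Xdj (K := K) Xop d hc (m + 2) 2
  have h2 := Xdi_mul_Xdj (K := K) Xop d hc 1 (m + 3)
  norm_num at h1 h2
  have e1 : m + 2 + 1 = m + 3 := rfl
  have e2 : m + 2 + 2 = m + 4 := rfl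
  have e5 : m + 2 + 1 + 2 = m + 5 := by omega
  have e3 : (1:ℕ) + 1 + (m + 3) = m + 5 := by omega
  have e4 : (1:ℕ) + (m + 3) = m + 4 := by omega
  rw [e1, e2, e5] at h1
  rw [e3, e4] at h2
  rw [h1, h2]
  rw [add_sub_add_left_eq_sub, ← sub_smul]
  congr 1
  push_cast
  ring

end aux

/-- The subalgebra of operators preserving the space of polynomials with zero
constant coefficient. -/
def constPreserving (K : Type*) [Field K] : Subalgebra K (Module.End K (Polynomial K)) where
  carrier := {a | ∀ p : Polynomial K, p.coeff 0 = 0 → (a p).coeff 0 = 0}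
  mul_mem' := by
    intro a b ha hb p hp
    rw [Module.End.mul_apply]
    exact ha _ (hb _ hp)
  add_mem' := by
    intro a b ha hb p hp
    rw [LinearMap.add_apply, Polynomial.coeff_add, ha _ hp, hb _ hp, add_zero]
  one_mem' := by
    intro p hp
    simpa using hp
  algebraMap_mem' := by
    intro c p hp
    rw [Module.algebraMap_end_apply, Polynomial.coeff_smul, hp, smul_zero]

set_option maxHeartbeats 1000000


/-- Let `K` be a field of characteristic zero.  Inside `End_K(K[x])` let `X` be
multiplication by `x`, `∂` the derivative, `A₁` the (first) Weyl algebra — the subalgebra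
generated by `X` and `∂` — `h = X∂`, and `R₂` the subalgebra generated by
`h∂², h∂, h, X`.  Then `R₂` is a maximal subalgebra of `A₁`. -/
theorem R2_is_maximal_subalgebra_of_Weyl_algebra
    {K : Type*} [Field K] [CharZero K]
    (Xop d h : Module.End K (Polynomial K))
    (hX : Xop = Algebra.lmul K (Polynomial K) Polynomial.X)
    (hd : d = (Polynomial.derivative : Polynomial K →ₗ[K] Polynomial K))
    (hh : h = Xop * d)
    (A₁ R₂ : Subalgebra K (Module.End K (Polynomial K)))
    (hA₁ : A₁ = Algebra.adjoin K {Xop, d})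
    (hR₂ : R₂ = Algebra.adjoin K {h * d ^ 2, h * d, h, Xop}) :
    R₂ ≠ A₁ ∧ ∀ B : Subalgebra K (Module.End K (Polynomial K)),
      R₂ ≤ B → B ≤ A₁ → B = R₂ ∨ B = A₁ := by
  have hXp : ∀ p : Polynomial K, Xop p = Polynomial.X * p := by
    intro p; rw [hX, Algebra.coe_lmul_eq_mul, LinearMap.mul_apply']
  have hdp : ∀ p : Polynomial K, d p = Polynomial.derivative p := by
    intro p; rw [hd]
  -- the fundamental commutation relation
  have hc : d * Xop = Xop * d + 1 := by
    apply LinearMap.ext; intro p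
    rw [Module.End.mul_apply, LinearMap.add_apply, Module.End.mul_apply, Module.End.one_apply,
      hXp, hdp, hdp, hXp, Polynomial.derivative_mul, Polynomial.derivative_X, one_mul]
    ring
  -- generators of R₂ in normal form
  have hgen1 : h = Xop * d ^ 1 := by rw [hh, pow_one]
  have hgen2 : h * d = Xop * d ^ 2 := by rw [hh, sq, mul_assoc]
  have hgen3 : h * d ^ 2 = Xop * d ^ 3 := by
    rw [hh, mul_assoc, ← pow_succ']
  have Xmem : Xop ∈ R₂ := by
    rw [hR₂]; exact Algebra.subset_adjoin (by simp)
  have h1mem : Xop * d ^ 1 ∈ R₂ := by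
    rw [hR₂, ← hgen1]; exact Algebra.subset_adjoin (by simp)
  have h2mem : Xop * d ^ 2 ∈ R₂ := by
    rw [hR₂, ← hgen2]; exact Algebra.subset_adjoin (by simp)
  have h3mem : Xop * d ^ 3 ∈ R₂ := by
    rw [hR₂, ← hgen3]; exact Algebra.subset_adjoin (by simp)
  -- Fact 1 : all X∂^k lie in R₂
  have fact1 : ∀ k : ℕ, Xop * d ^ k ∈ R₂ := by
    have base3 : ∀ m : ℕ, Xop * d ^ (m + 3) ∈ R₂ := by
      intro m
      induction m with
      | zero => exact h3mem
      | succ n ih =>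
        have hs := Xd_step (K := K) Xop d hc n
        have hne : ((n + 1 : ℕ) : K) ≠ 0 := Nat.cast_ne_zero.mpr (Nat.succ_ne_zero n)
        have heq : Xop * d ^ (n + 4)
            = ((n + 1 : ℕ) : K)⁻¹ •
              ((Xop * d ^ (n + 3)) * (Xop * d ^ 2) - (Xop * d ^ 2) * (Xop * d ^ (n + 3))) := by
          rw [hs, smul_smul, inv_mul_cancel₀ hne, one_smul]
        have e : n + 1 + 3 = n + 4 := by omega
        rw [e, heq]
        exact R₂.smul_mem (sub_mem (mul_mem ih h2mem) (mul_mem h2mem ih)) _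
    intro k
    match k with
    | 0 => simpa using Xmem
    | 1 => exact h1mem
    | 2 => exact h2mem
    | (m + 3) => exact base3 m
  -- the submodule of "constant coefficient" differential operators
  set D : Submodule K (Module.End K (Polynomial K)) :=
    Submodule.span K (Set.range fun j : ℕ => d ^ j) with hD
  have hdD : ∀ j : ℕ, d ^ j ∈ D := fun j => Submodule.subset_span ⟨j, rfl⟩
  set M : Submodule K (Module.End K (Polynomial K)) := R₂.toSubmodule ⊔ D with hM
  have hR2M : ∀ r ∈ R₂, r ∈ M := fun r hr => Submodule.mem_sup_left hr
  have hDM : ∀ z ∈ D, z ∈ M := fun z hz => Submodule.mem_sup_right hz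
  have mulD : ∀ a : Module.End K (Polynomial K),
      (∀ j : ℕ, a * d ^ j ∈ M) → ∀ z ∈ D, a * z ∈ M := by
    intro a ha z hz
    induction hz using Submodule.span_induction with
    | mem x hx => obtain ⟨j, rfl⟩ := hx; exact ha j
    | zero => rw [mul_zero]; exact M.zero_mem
    | add x y _ _ hx hy => rw [mul_add]; exact M.add_mem hx hy
    | smul c x _ hx => rw [mul_smul_comm]; exact M.smul_mem c hx
  have Dmul : ∀ b : Module.End K (Polynomial K),
      (∀ j : ℕ, d ^ j * b ∈ M) → ∀ z ∈ D, z * b ∈ M := by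
    intro b hb z hz
    induction hz using Submodule.span_induction with
    | mem x hx => obtain ⟨j, rfl⟩ := hx; exact hb j
    | zero => rw [zero_mul]; exact M.zero_mem
    | add x y _ _ hx hy => rw [add_mul]; exact M.add_mem hx hy
    | smul c x _ hx => rw [smul_mul_assoc]; exact M.smul_mem c hx
  have dpow_mul_gen : ∀ j k : ℕ, d ^ j * (Xop * d ^ k) ∈ M := by
    intro j k
    cases j with
    | zero => simpa using hR2M _ (fact1 k)
    | succ n =>
      have heq : d ^ (n + 1) * (Xop * d ^ k)
          = Xop * d ^ (n + 1 + k) + ((n + 1 : ℕ) : K) • d ^ (n + k) := by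
        rw [← mul_assoc, dpow_mul_X (K := K) Xop d hc n, add_mul, smul_mul_assoc,
          mul_assoc, ← pow_add, ← pow_add]
      rw [heq]
      exact M.add_mem (hR2M _ (fact1 _)) (hDM _ (D.smul_mem _ (hdD _)))
  have genform : ∀ x ∈ ({h * d ^ 2, h * d, h, Xop} : Set (Module.End K (Polynomial K))),
      ∃ k : ℕ, x = Xop * d ^ k := by
    rintro x (rfl | rfl | rfl | rfl)
    · exact ⟨3, hgen3⟩
    · exact ⟨2, hgen2⟩
    · exact ⟨1, hgen1⟩
    · exact ⟨0, by rw [pow_zero, mul_one]⟩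
  have L1 : ∀ r ∈ R₂, ∀ j : ℕ, r * d ^ j ∈ M := by
    intro r hr
    rw [hR₂] at hr
    induction hr using Algebra.adjoin_induction with
    | mem x hx =>
      intro j
      obtain ⟨k, rfl⟩ := genform x hx
      rw [mul_assoc, ← pow_add]
      exact hR2M _ (fact1 _)
    | algebraMap c =>
      intro j
      have : algebraMap K (Module.End K (Polynomial K)) c * d ^ j = c • d ^ j := by
        rw [← Algebra.smul_def]
      rw [this]
      exact hDM _ (D.smul_mem _ (hdD _))
    | add x y hx hy ihx ihy =>
      intro j; rw [add_mul]; exact M.add_mem (ihx j) (ihy j)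
    | mul x y hx hy ihx ihy =>
      intro j
      rw [mul_assoc]
      obtain ⟨r', hr', z, hz, heq⟩ := Submodule.mem_sup.mp (ihy j)
      rw [← heq, mul_add]
      refine M.add_mem (hR2M _ (R₂.mul_mem (hR₂ ▸ hx) hr')) ?_
      exact mulD x ihx z hz
  have L2 : ∀ r ∈ R₂, ∀ j : ℕ, d ^ j * r ∈ M := by
    intro r hr
    rw [hR₂] at hr
    induction hr using Algebra.adjoin_induction with
    | mem x hx =>
      intro j
      obtain ⟨k, rfl⟩ := genform x hx
      exact dpow_mul_gen j k
    | algebraMap c =>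
      intro j
      have : d ^ j * algebraMap K (Module.End K (Polynomial K)) c = c • d ^ j := by
        rw [← Algebra.commutes, ← Algebra.smul_def]
      rw [this]
      exact hDM _ (D.smul_mem _ (hdD _))
    | add x y hx hy ihx ihy =>
      intro j; rw [mul_add]; exact M.add_mem (ihx j) (ihy j)
    | mul x y hx hy ihx ihy =>
      intro j
      rw [← mul_assoc]
      obtain ⟨r', hr', z, hz, heq⟩ := Submodule.mem_sup.mp (ihx j)
      rw [← heq, add_mul]
      refine M.add_mem (hR2M _ (R₂.mul_mem hr' (hR₂ ▸ hy))) ?_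
      exact Dmul y ihy z hz
  have MmulM : ∀ a ∈ M, ∀ b ∈ M, a * b ∈ M := by
    intro a ha b hb
    obtain ⟨r₁, hr₁, z₁, hz₁, rfl⟩ := Submodule.mem_sup.mp ha
    obtain ⟨r₂, hr₂, z₂, hz₂, rfl⟩ := Submodule.mem_sup.mp hb
    rw [add_mul, mul_add, mul_add]
    refine M.add_mem (M.add_mem (hR2M _ (R₂.mul_mem hr₁ hr₂)) ?_) (M.add_mem ?_ ?_)
    · exact mulD r₁ (L1 r₁ hr₁) z₂ hz₂
    · exact Dmul r₂ (L2 r₂ hr₂) z₁ hz₁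
    · refine Dmul z₂ (fun i => ?_) z₁ hz₁
      refine mulD (d ^ i) (fun j => ?_) z₂ hz₂
      rw [← pow_add]
      exact hDM _ (hdD _)
  have A1M : ∀ a ∈ A₁, a ∈ M := by
    intro a ha
    rw [hA₁] at ha
    induction ha using Algebra.adjoin_induction with
    | mem x hx =>
      rcases hx with rfl | hx
      · exact hR2M _ Xmem
      · rw [Set.mem_singleton_iff] at hx
        subst hx
        simpa using hDM _ (hdD 1)
    | algebraMap c =>
      rw [Algebra.algebraMap_eq_smul_one]
      exact hR2M _ (R₂.smul_mem R₂.one_mem c)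
    | add x y hx hy ihx ihy => exact M.add_mem ihx ihy
    | mul x y hx hy ihx ihy => exact MmulM x ihx y ihy
  -- extraction lemma: from a nonzero constant-coefficient operator one recovers d
  have key : ∀ B : Subalgebra K (Module.End K (Polynomial K)), Xop ∈ B →
      ∀ (n : ℕ) (c : ℕ → K), c (n + 1) ≠ 0 →
        (∑ j ∈ Finset.range (n + 1), c (j + 1) • d ^ (j + 1)) ∈ B → d ∈ B := by
    intro B hXB n
    induction n with
    | zero =>
      intro c hc0 hz
      have hsum : (∑ j ∈ Finset.range 1, c (j + 1) • d ^ (j + 1)) = c 1 • d := by simp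
      rw [hsum] at hz
      have := B.smul_mem hz (c 1)⁻¹
      rwa [inv_smul_smul₀ hc0] at this
    | succ n ih =>
      intro c hc0 hz
      set z : Module.End K (Polynomial K) :=
        ∑ j ∈ Finset.range (n + 2), c (j + 1) • d ^ (j + 1) with hzdef
      have hw : z * Xop - Xop * z ∈ B := sub_mem (B.mul_mem hz hXB) (B.mul_mem hXB hz)
      have hcalc : z * Xop - Xop * z
          = ∑ j ∈ Finset.range (n + 2), (((j + 1 : ℕ) : K) * c (j + 1)) • d ^ j := by
        rw [hzdef, Finset.sum_mul, Finset.mul_sum, ← Finset.sum_sub_distrib]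
        refine Finset.sum_congr rfl fun j _ => ?_
        rw [smul_mul_assoc, mul_smul_comm, dpow_mul_X (K := K) Xop d hc j, smul_add,
          add_sub_cancel_left, smul_smul, mul_comm]
      have hsplit : z * Xop - Xop * z
          = (∑ i ∈ Finset.range (n + 1), (((i + 1 + 1 : ℕ) : K) * c (i + 1 + 1)) • d ^ (i + 1))
            + (((0 + 1 : ℕ) : K) * c (0 + 1)) • d ^ (0 : ℕ) := by
        rw [hcalc, Finset.sum_range_succ']
      have hd0B : (d ^ (0:ℕ) : Module.End K (Polynomial K)) ∈ B := by
        rw [pow_zero]; exact B.one_mem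
      have hw2 : (∑ i ∈ Finset.range (n + 1), (((i + 1 + 1 : ℕ) : K) * c (i + 1 + 1)) • d ^ (i + 1)) ∈ B := by
        have h1 := eq_sub_of_add_eq hsplit.symm
        rw [h1]
        exact sub_mem hw (B.smul_mem hd0B _)
      refine ih (fun t => ((t + 1 : ℕ) : K) * c (t + 1)) ?_ hw2
      exact mul_ne_zero (Nat.cast_ne_zero.mpr (by omega)) hc0
  -- the separating subalgebra: d ∉ R₂
  have hR2U : R₂ ≤ constPreserving K := by
    rw [hR₂]
    apply Algebra.adjoin_le
    intro x hx
    obtain ⟨k, rfl⟩ := genform x hx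
    intro p _
    have : (Xop * d ^ k) p = Polynomial.X * ((d ^ k) p) := by
      rw [Module.End.mul_apply, hXp]
    rw [this, Polynomial.mul_coeff_zero, Polynomial.coeff_X_zero, zero_mul]
  have hdU : d ∉ constPreserving K := by
    intro hmem
    have := hmem Polynomial.X Polynomial.coeff_X_zero
    rw [hdp, Polynomial.derivative_X, Polynomial.coeff_one_zero] at this
    exact one_ne_zero this
  have hdA : d ∈ A₁ := by
    rw [hA₁]; exact Algebra.subset_adjoin (by simp)
  constructor
  · intro hRA
    exact hdU (hR2U (hRA ▸ hdA))
  · intro B hRB hBA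
    by_cases hBR : B ≤ R₂
    · left; exact le_antisymm hBR hRB
    · right
      obtain ⟨b, hbB, hbR⟩ := SetLike.not_le_iff_exists.mp hBR
      obtain ⟨r, hr, z, hz, heq⟩ := Submodule.mem_sup.mp (A1M b (hBA hbB))
      have hrR : r ∈ R₂ := hr
      have hzB : z ∈ B := by
        have hzeq : z = b - r := by rw [← heq]; abel
        rw [hzeq]
        exact sub_mem hbB (hRB hrR)
      have hzR : z ∉ R₂ := fun hzR2 => hbR (heq ▸ R₂.add_mem hrR hzR2)
      obtain ⟨c, hcz⟩ := Finsupp.mem_span_range_iff_exists_finsupp.mp hz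
      have hsupp : ∃ m ∈ c.support, m ≠ 0 := by
        by_contra hno
        push_neg at hno
        apply hzR
        rw [← hcz, Finsupp.sum]
        refine Subalgebra.sum_mem R₂ fun i hi => ?_
        rw [hno i hi, pow_zero]
        exact R₂.smul_mem R₂.one_mem _
      obtain ⟨m, hmsupp, hm0⟩ := hsupp
      have hne : c.support.Nonempty := ⟨m, hmsupp⟩
      set N := c.support.max' hne with hNdef
      have hN1 : 1 ≤ N := le_trans (by omega) (Finset.le_max' _ m hmsupp)
      have hcN : c N ≠ 0 := Finsupp.mem_support_iff.mp (c.support.max'_mem hne)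
      have hzdecomp : z = ∑ j ∈ Finset.range (N + 1), c j • d ^ j := by
        rw [← hcz, Finsupp.sum]
        refine Finset.sum_subset (fun j hj => Finset.mem_range.mpr ?_) (fun j _ hj => ?_)
        · exact Nat.lt_succ_of_le (Finset.le_max' _ j hj)
        · rw [Finsupp.notMem_support_iff.mp hj, zero_smul]
      have hsplit2 : (∑ j ∈ Finset.range (N + 1), c j • d ^ j)
          = (∑ i ∈ Finset.range N, c (i + 1) • d ^ (i + 1)) + c 0 • d ^ (0 : ℕ) :=
        Finset.sum_range_succ' _ _
      have hd0B : (d ^ (0:ℕ) : Module.End K (Polynomial K)) ∈ B := by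
        rw [pow_zero]; exact B.one_mem
      have hz'B : (∑ i ∈ Finset.range N, c (i + 1) • d ^ (i + 1)) ∈ B := by
        have h1 : z = (∑ i ∈ Finset.range N, c (i + 1) • d ^ (i + 1)) + c 0 • d ^ (0 : ℕ) := by
          rw [hzdecomp, hsplit2]
        rw [eq_sub_of_add_eq h1.symm]
        exact sub_mem hzB (B.smul_mem hd0B _)
      obtain ⟨n, hNn⟩ : ∃ n, N = n + 1 := ⟨N - 1, by omega⟩
      rw [hNn] at hcN hz'B
      have hdB : d ∈ B := key B (hRB Xmem) n c hcN hz'B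
      apply le_antisymm hBA
      rw [hA₁]
      apply Algebra.adjoin_le
      intro x hx
      rcases hx with rfl | hx
      · exact hRB Xmem
      · rw [Set.mem_singleton_iff] at hx
        subst hx
        exact hdB
end
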